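/- Let q ≥ 2 be an even integer and n ≥ 2 an integer. Then the period of any orientable sequence of order n over ℤ_q is at most (q^n − q^{⌈n/2⌉} − q)/2. -/

import Mathlib

namespace OSeq

variable {q : ℕ}

/-- The `n`-tuple (window) of the sequence `s` at position `i`. -/
def window (s : ℤ → ZMod q) (n : ℕ) (i : ℤ) : Fin n → ZMod q :=
  fun k => s (i + (k : ℕ))

/-- The reverse of an `n`-tuple. -/
def tupRev {n : ℕ} (u : Fin n → ZMod q) : Fin n → ZMod q :=
  fun k => u k.rev

/-- `m` is the (least) period of the periodic sequence `s`. -/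
def IsPeriod (s : ℤ → ZMod q) (m : ℕ) : Prop :=
  0 < m ∧ (∀ i : ℤ, s (i + (m : ℤ)) = s i) ∧
    ∀ m' : ℕ, 0 < m' → (∀ i : ℤ, s (i + (m' : ℤ)) = s i) → m ≤ m'

/-- `s` is an `n`-window sequence of period `m`. -/
def IsNWindowSeq (s : ℤ → ZMod q) (n m : ℕ) : Prop :=
  IsPeriod s m ∧ ∀ i j : ℤ, window s n i = window s n j → i ≡ j [ZMOD (m : ℤ)]

/-- `s` is an orientable sequence of order `n` and period `m`. -/
def IsOS (s : ℤ → ZMod q) (n m : ℕ) : Prop :=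
  IsNWindowSeq s n m ∧ ∀ i j : ℤ, window s n i ≠ tupRev (window s n j)

/-- `s` is a negative orientable sequence of order `n` and period `m`. -/
def IsNOS (s : ℤ → ZMod q) (n m : ℕ) : Prop :=
  IsNWindowSeq s n m ∧ ∀ i j : ℤ, window s n i ≠ - tupRev (window s n j)

/-- `s` is a special orientable sequence of order `n` and period `m`:
orientable and also negative orientable. -/
def IsSpecialOS (s : ℤ → ZMod q) (n m : ℕ) : Prop :=
  IsOS s n m ∧ ∀ i j : ℤ, window s n i ≠ - tupRev (window s n j)

/-- The weight modulo `q` of one period of `s`. -/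
def wq (s : ℤ → ZMod q) (m : ℕ) : ZMod q :=
  ∑ i ∈ Finset.range m, s (i : ℤ)

/-- The alternating sign weight modulo `q` of one period of `s`. -/
def wqA (s : ℤ → ZMod q) (m : ℕ) : ZMod q :=
  ∑ i ∈ Finset.range m, (-1 : ZMod q) ^ (m - 1 - i) * s (i : ℤ)

/-- The Lempel homomorphism `D` on sequences. -/
def D (t : ℤ → ZMod q) : ℤ → ZMod q := fun j => t (j + 1) - t j

/-- The homomorphism `A` on sequences. -/
def A (t : ℤ → ZMod q) : ℤ → ZMod q := fun j => t (j + 1) + t j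

/-- Shift of a sequence by `c`. -/
def shift (t : ℤ → ZMod q) (c : ℤ) : ℤ → ZMod q := fun i => t (i + c)

/-- `t'` is a translate of `t`. -/
def IsTranslate (t t' : ℤ → ZMod q) : Prop := ∃ c : ZMod q, ∀ i : ℤ, t' i = t i + c

/-- `t'` is an alternating sign translate of `t`. -/
def IsAltTranslate (t t' : ℤ → ZMod q) : Prop :=
  ∃ c : ZMod q, ∀ i : ℤ, t' i = t i + (if i % 2 = 0 then c else -c)

/-- Two sequences are (`n`-window) disjoint. -/
def WindowDisjoint (n : ℕ) (s t : ℤ → ZMod q) : Prop :=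
  ∀ i j : ℤ, window s n i ≠ window t n j

/-- Orientable-disjoint. -/
def ODisjoint (n : ℕ) (s t : ℤ → ZMod q) : Prop :=
  WindowDisjoint n s t ∧ ∀ i j : ℤ, window s n i ≠ tupRev (window t n j)

/-- Negative orientable-disjoint (no-disjoint). -/
def NODisjoint (n : ℕ) (s t : ℤ → ZMod q) : Prop :=
  WindowDisjoint n s t ∧ ∀ i j : ℤ, window s n i ≠ - tupRev (window t n j)

/-- Special-orientable-disjoint. -/
def SpecialODisjoint (n : ℕ) (s t : ℤ → ZMod q) : Prop :=
  ODisjoint n s t ∧ ∀ i j : ℤ, window s n i ≠ - tupRev (window t n j)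

/-- The string `a^t` appears in `s`. -/
def HasString (s : ℤ → ZMod q) (a : ZMod q) (t : ℕ) : Prop :=
  ∃ j : ℤ, ∀ k : ℕ, k < t → s (j + (k : ℤ)) = a

/-- There is a run `a^t` of `a` in `s` starting at position `j`. -/
def IsRunAt (s : ℤ → ZMod q) (a : ZMod q) (j : ℤ) (t : ℕ) : Prop :=
  (∀ k : ℕ, k < t → s (j + (k : ℤ)) = a) ∧ s (j - 1) ≠ a ∧ s (j + (t : ℤ)) ≠ a

/-- `a^t` is a maximal run of `a` in `s`: the string `a^t` appears and every
string `a^{t'}` appearing in `s` has `t' ≤ t`. -/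
def IsMaxRun (s : ℤ → ZMod q) (a : ZMod q) (t : ℕ) : Prop :=
  HasString s a t ∧ ∀ t' : ℕ, HasString s a t' → t' ≤ t

/-- `k`-th entry of the alternating string `a, -a, a, -a, ...`. -/
def altVal (a : ZMod q) (k : ℕ) : ZMod q := if k % 2 = 0 then a else -a

/-- The signed string `ạ^t` (alternating `a, -a, ...`) appears in `s`. -/
def HasSignedString (s : ℤ → ZMod q) (a : ZMod q) (t : ℕ) : Prop :=
  ∃ j : ℤ, ∀ k : ℕ, k < t → s (j + (k : ℤ)) = altVal a k

/-- There is a signed run `ạ^t` of `a` in `s` starting at position `j`. -/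
def IsSignedRunAt (s : ℤ → ZMod q) (a : ZMod q) (j : ℤ) (t : ℕ) : Prop :=
  (∀ k : ℕ, k < t → s (j + (k : ℤ)) = altVal a k) ∧
    s (j - 1) ≠ -a ∧ s (j + (t : ℤ)) ≠ altVal a t

/-- `ạ^t` is a maximal signed run of `a` in `s`. -/
def IsMaxSignedRun (s : ℤ → ZMod q) (a : ZMod q) (t : ℕ) : Prop :=
  HasSignedString s a t ∧ ∀ t' : ℕ, HasSignedString s a t' → t' ≤ t

/-- The sequence obtained from the ring sequence `[s_0,...,s_{m-1}]` of `s` by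
inserting one extra symbol `a` at ring position `r`, i.e. with ring sequence
`[s_0,...,s_{r-1}, a, s_r, ..., s_{m-1}]` of length `m+1`. -/
def insert1 (s : ℤ → ZMod q) (m r : ℕ) (a : ZMod q) : ℤ → ZMod q :=
  fun j =>
    let j' := (j % ((m : ℤ) + 1)).toNat
    if j' < r then s (j' : ℤ) else if j' = r then a else s ((j' : ℤ) - 1)

/-- The sequence obtained from the ring sequence `[s_0,...,s_{m-1}]` of `s` by
inserting the two symbols `a, -a` at ring position `r`, i.e. with ring sequence
`[s_0,...,s_{r-1}, a, -a, s_r, ..., s_{m-1}]` of length `m+2`. -/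
def insert2 (s : ℤ → ZMod q) (m r : ℕ) (a : ZMod q) : ℤ → ZMod q :=
  fun j =>
    let j' := (j % ((m : ℤ) + 2)).toNat
    if j' < r then s (j' : ℤ)
    else if j' = r then a
    else if j' = r + 1 then -a
    else s ((j' : ℤ) - 2)

/-- The operation `E_a` (with the convention `E_0(S) = S`). -/
def Emod (s : ℤ → ZMod q) (m r : ℕ) (a : ZMod q) : ℤ → ZMod q :=
  if a = 0 then s else insert1 s m r a

/-- A sequence is good (for order `n`) if every run of `0` has length at most `n-2`. -/
def GoodSeq (s : ℤ → ZMod q) (n : ℕ) : Prop :=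
  ∀ t : ℕ, HasString s 0 t → t ≤ n - 2

/-- A tuple is uniform if it is constant. -/
def Uniform {n : ℕ} (u : Fin n → ZMod q) : Prop := ∃ c : ZMod q, ∀ i, u i = c

/-- A tuple is symmetric if it equals its own reverse. -/
def Symm {n : ℕ} (u : Fin n → ZMod q) : Prop := ∀ i : Fin n, u i = u i.rev

/-- An `n`-tuple is `m`-symmetric (`m ≤ n`) if `u_i = u_{m-1-i}` for `0 ≤ i ≤ m-1`. -/
def MSymm {n : ℕ} (u : Fin n → ZMod q) (m : ℕ) (hm : m ≤ n) : Prop :=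
  ∀ i : Fin m, u (Fin.castLE hm i) = u (Fin.castLE hm i.rev)

/-- An `n`-tuple (`n ≥ 2`) is alternating. -/
def Alternating {n : ℕ} (hn : 2 ≤ n) (u : Fin n → ZMod q) : Prop :=
  u ⟨0, by omega⟩ ≠ u ⟨1, by omega⟩ ∧
    ∀ i : Fin n, u i = if (i : ℕ) % 2 = 0 then u ⟨0, by omega⟩ else u ⟨1, by omega⟩

/-- `L_n(v)`: the set of `n`-tuples whose first `n-r` entries agree with the
`(n-r)`-tuple `v`. -/
def Lset (n r : ℕ) (v : Fin (n - r) → ZMod q) : Set (Fin n → ZMod q) :=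
  {u | ∀ i : Fin (n - r), u (Fin.castLE (Nat.sub_le n r) i) = v i}

/-- The `n`-tuple `u` appears in the sequence `s`. -/
def AppearsIn (s : ℤ → ZMod q) (n : ℕ) (u : Fin n → ZMod q) : Prop :=
  ∃ i : ℤ, window s n i = u

end OSeq

open OSeq

/-! The windows `W` of `S`, their reverses and the palindromes are pairwise disjoint sets of
`n`-tuples, since `S` is orientable, and there are at least `q ^ ⌈n/2⌉` palindromes. For each
symbol `a`, the tuples `a^(n-1) c` and `c a^(n-1)` lie in `W` for equally many `c`: both count the
occurrences of `a^(n-1)` in a period. These two sets of `c` are disjoint and avoid `a`, so as `q`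
is even some `c ≠ a` leaves both `a^(n-1) c` and its reverse outside `W`. The `q` tuples obtained
in this way are neither windows, reversed windows nor palindromes, whence
`2m + q + q ^ ⌈n/2⌉ ≤ q ^ n`. -/

open Finset

theorem Function.Periodic.count_add_one {p : ℕ → Prop} [DecidablePred p] {m : ℕ}
    (hp : Function.Periodic p m) : Nat.count (fun i => p (i + 1)) m = Nat.count p m := by
  have h := Nat.count_succ' (p := p) m
  have hm : p m ↔ p 0 := by rw [← hp 0, zero_add]
  rw [Nat.count_succ] at h
  simp only [hm] at h
  omega

lemma exists_ne_notMem_of_card_eq {α : Type*} [Fintype α] [DecidableEq α]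
    (hα : Even (Fintype.card α)) {O X : Finset α} (hOX : Disjoint O X) (hcard : #O = #X)
    {a : α} (haO : a ∉ O) (haX : a ∉ X) : ∃ c ≠ a, c ∉ O ∧ c ∉ X := by
  by_contra! h
  have hcover : insert a (O ∪ X) = univ := eq_univ_of_forall fun c => by
    by_cases hc : c = a
    · simp [hc]
    · by_cases hcO : c ∈ O <;> simp [hcO, h c hc]
  have := congrArg card hcover
  rw [card_insert_of_notMem (by simp [haO, haX]), card_union_of_disjoint hOX, card_univ] at this
  obtain ⟨t, ht⟩ := hα
  omega

namespace Fin

variable {α : Type*} [Fintype α] [DecidableEq α] {k : ℕ}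

lemma card_filter_snoc_mem (W : Finset (Fin (k + 1) → α)) (v : Fin k → α) :
    #{c | Fin.snoc v c ∈ W} = #{u ∈ W | Fin.init u = v} := by
  refine card_nbij' (Fin.snoc v ·) (· (Fin.last k)) ?_ ?_ ?_ ?_ <;> intro x hx
  · simpa using hx
  · simp only [coe_filter, Set.mem_ofPred_eq] at hx ⊢
    rw [← hx.2]
    simpa using hx.1
  · simp
  · simp only [coe_filter, Set.mem_ofPred_eq] at hx
    rw [← hx.2]
    simp

lemma card_filter_cons_mem (W : Finset (Fin (k + 1) → α)) (v : Fin k → α) :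
    #{c | Fin.cons c v ∈ W} = #{u ∈ W | Fin.tail u = v} := by
  refine card_nbij' (Fin.cons · v) (· 0) ?_ ?_ ?_ ?_ <;> intro x hx
  · simpa using hx
  · simp only [coe_filter, Set.mem_ofPred_eq] at hx ⊢
    rw [← hx.2]
    simpa using hx.1
  · simp
  · simp only [coe_filter, Set.mem_ofPred_eq] at hx
    rw [← hx.2]
    simp

end Fin

namespace OSeq

variable {q : ℕ}

section Tuples

variable {n : ℕ}

@[simp]
lemma tupRev_tupRev (u : Fin n → ZMod q) : tupRev (tupRev u) = u := by
  funext k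
  simp [tupRev]

lemma tupRev_injective : Function.Injective (tupRev : (Fin n → ZMod q) → _) :=
  Function.LeftInverse.injective tupRev_tupRev

lemma tupRev_snoc {k : ℕ} (v : Fin k → ZMod q) (c : ZMod q) :
    tupRev (Fin.snoc v c : Fin (k + 1) → ZMod q) = Fin.cons c (tupRev v) :=
  Fin.snoc_comp_rev c v

lemma mem_image_tupRev {W : Finset (Fin n → ZMod q)} {u : Fin n → ZMod q} :
    u ∈ W.image tupRev ↔ tupRev u ∈ W := by
  refine ⟨fun h => ?_, fun h => mem_image.2 ⟨_, h, tupRev_tupRev u⟩⟩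
  obtain ⟨w, hw, rfl⟩ := mem_image.1 h
  simpa using hw

end Tuples

section Windows

variable {s : ℤ → ZMod q} {n m : ℕ}

def windowSet (s : ℤ → ZMod q) (n m : ℕ) : Finset (Fin n → ZMod q) :=
  (range m).image fun i : ℕ => window s n i

lemma init_window (s : ℤ → ZMod q) (n : ℕ) (i : ℤ) :
    Fin.init (window s (n + 1) i) = window s n i :=
  rfl

lemma tail_window (s : ℤ → ZMod q) (n : ℕ) (i : ℤ) :
    Fin.tail (window s (n + 1) i) = window s n (i + 1) := by
  funext k
  simp only [Fin.tail, window, Fin.val_succ]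
  push_cast
  ring_nf

lemma IsPeriod.window_add (h : IsPeriod s m) (i : ℤ) : window s n (i + m) = window s n i := by
  funext k
  exact (congrArg s (add_right_comm ..)).trans (h.2.1 _)

lemma IsNWindowSeq.injOn_window (hS : IsNWindowSeq s n m) :
    Set.InjOn (fun i : ℕ => window s n i) (range m) := fun i hi j hj hij =>
  (Int.natCast_modEq_iff.1 (hS.2 i j hij)).eq_of_lt_of_lt (mem_range.1 hi) (mem_range.1 hj)

lemma IsNWindowSeq.card_windowSet (hS : IsNWindowSeq s n m) : #(windowSet s n m) = m := by
  rw [windowSet, card_image_of_injOn hS.injOn_window, card_range]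

lemma IsNWindowSeq.card_filter_windowSet (hS : IsNWindowSeq s n m)
    (p : (Fin n → ZMod q) → Prop) [DecidablePred p] :
    #{u ∈ windowSet s n m | p u} = Nat.count (fun i => p (window s n i)) m := by
  rw [windowSet, filter_image, card_image_of_injOn (hS.injOn_window.mono (filter_subset _ _)),
    Nat.count_eq_card_filter_range]

lemma IsOS.tupRev_notMem_windowSet (hS : IsOS s n m) {u : Fin n → ZMod q}
    (hu : u ∈ windowSet s n m) : tupRev u ∉ windowSet s n m := by
  intro hru
  obtain ⟨i, -, rfl⟩ := mem_image.1 hu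
  obtain ⟨j, -, hj⟩ := mem_image.1 hru
  exact hS.2 j i hj

end Windows

variable [NeZero q]

def palindromes (q n : ℕ) [NeZero q] : Finset (Fin n → ZMod q) := {u | tupRev u = u}

lemma pow_le_card_palindromes (n : ℕ) : q ^ ((n + 1) / 2) ≤ #(palindromes q n) := by
  let fold : (Fin ((n + 1) / 2) → ZMod q) → Fin n → ZMod q :=
    fun v k => v ⟨min k (n - 1 - k), by omega⟩
  have hfold : ∀ v, fold v ∈ palindromes q n := by
    intro v
    simp only [palindromes, mem_filter, mem_univ, true_and]
    funext k
    exact congrArg v (Fin.ext (by simp only [Fin.val_rev]; omega))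
  have hinj : Function.Injective fold := by
    intro v w hvw
    funext j
    simpa [fold, show min (j : ℕ) (n - 1 - j) = j by omega] using congrFun hvw ⟨j, by omega⟩
  simpa using card_le_card_of_injOn (s := univ) fold (fun v _ => hfold v) hinj.injOn

-- In de Bruijn graph terms: every vertex has equal in- and out-degree.
def IsBalanced {k : ℕ} (W : Finset (Fin (k + 1) → ZMod q)) : Prop :=
  ∀ v : Fin k → ZMod q, #{c | Fin.snoc v c ∈ W} = #{c | Fin.cons c v ∈ W}

lemma IsNWindowSeq.isBalanced {s : ℤ → ZMod q} {k m : ℕ} (hS : IsNWindowSeq s (k + 1) m) :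
    IsBalanced (windowSet s (k + 1) m) := by
  intro v
  rw [Fin.card_filter_snoc_mem, Fin.card_filter_cons_mem, hS.card_filter_windowSet,
    hS.card_filter_windowSet]
  simp only [init_window, tail_window]
  have hp : Function.Periodic (fun i : ℕ => window s k i = v) m := fun i => by
    simp [hS.1.window_add]
  refine hp.count_add_one.symm.trans ?_
  simp only [Nat.cast_succ]

lemma IsBalanced.exists_ne_snoc_const_notMem (hq : Even q) {k : ℕ}
    {W : Finset (Fin (k + 1) → ZMod q)} (hrev : ∀ u ∈ W, tupRev u ∉ W) (hbal : IsBalanced W)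
    (a : ZMod q) :
    ∃ c ≠ a, Fin.snoc (fun _ => a) c ∉ W ∧ Fin.cons c (fun _ => a) ∉ W := by
  have hconst : (fun _ => a) ∉ W := fun h => hrev _ h h
  have hOX : Disjoint ({c | Fin.snoc (fun _ => a) c ∈ W} : Finset (ZMod q))
      ({c | Fin.cons c (fun _ => a) ∈ W} : Finset (ZMod q)) := by
    refine disjoint_filter.2 fun c _ hO hX => hrev _ hO ?_
    rwa [tupRev_snoc]
  have hsnoc : (Fin.snoc (fun _ => a) a : Fin (k + 1) → ZMod q) = fun _ => a := by
    funext i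
    simp [Fin.snoc]
  have hcons : (Fin.cons a (fun _ => a) : Fin (k + 1) → ZMod q) = fun _ => a := by
    funext i
    refine Fin.cases ?_ (fun j => ?_) i <;> simp
  simpa using exists_ne_notMem_of_card_eq (by simpa using hq) hOX (hbal _)
    (by simpa [hsnoc] using hconst) (by simpa [hcons] using hconst)

theorem two_mul_card_add_le_of_isBalanced (hq : Even q) {k : ℕ}
    {W : Finset (Fin (k + 2) → ZMod q)} (hrev : ∀ u ∈ W, tupRev u ∉ W)
    (hbal : IsBalanced W) :
    2 * #W + q + q ^ ((k + 2 + 1) / 2) ≤ q ^ (k + 2) := by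
  choose c hca hcW using hbal.exists_ne_snoc_const_notMem hq hrev
  let spike : ZMod q → Fin (k + 2) → ZMod q := fun a => Fin.snoc (fun _ => a) (c a)
  have spike_zero : ∀ a, spike a 0 = a := fun a => by simp [spike]
  have hspike_inj : Function.Injective spike := fun a b h => by
    simpa [spike_zero] using congrFun h 0
  have hWR : Disjoint W (W.image tupRev) :=
    disjoint_left.2 fun u hu huR => hrev u hu (by simpa using mem_image_tupRev.1 huR)
  have hM : Disjoint (W ∪ W.image tupRev) (univ.image spike) := by
    refine disjoint_left.2 fun u hu huM => ?_
    obtain ⟨a, -, rfl⟩ := mem_image.1 huM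
    rcases mem_union.1 hu with h | h
    · exact (hcW a).1 h
    · exact (hcW a).2 (by rwa [mem_image_tupRev, tupRev_snoc] at h)
  have hP : Disjoint (W ∪ W.image tupRev ∪ univ.image spike) (palindromes q (k + 2)) := by
    refine disjoint_left.2 fun u hu huP => ?_
    have hu' : tupRev u = u := (mem_filter.1 huP).2
    have huW : u ∉ W := fun h => hrev u h (by rwa [hu'])
    rcases mem_union.1 hu with h | h
    · rcases mem_union.1 h with h | h
      · exact huW h
      · exact huW (hu' ▸ mem_image_tupRev.1 h)
    · obtain ⟨a, -, rfl⟩ := mem_image.1 h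
      have h0 := congrFun hu' 0
      rw [tupRev_snoc, spike_zero] at h0
      exact hca a h0
  have hcard := card_le_univ (W ∪ W.image tupRev ∪ univ.image spike ∪ palindromes q (k + 2))
  rw [card_union_of_disjoint hP, card_union_of_disjoint hM, card_union_of_disjoint hWR,
    card_image_of_injective _ tupRev_injective, card_image_of_injective _ hspike_inj] at hcard
  have := pow_le_card_palindromes (q := q) (k + 2)
  simp only [card_univ, Fintype.card_fun, ZMod.card, Fintype.card_fin] at hcard this
  omega

end OSeq

/-- For even `q ≥ 2` and `n ≥ 2`, the period of any orientable sequence of order `n`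
over `ℤ_q` is at most `(q^n - q^⌈n/2⌉ - q)/2`. -/
theorem period_le_of_orientable_even {q n m : ℕ} (hq : 2 ≤ q) (hqeven : Even q)
    (hn : 2 ≤ n) (s : ℤ → ZMod q) (hS : IsOS s n m) :
    2 * (m : ℤ) ≤ (q : ℤ) ^ n - (q : ℤ) ^ ((n + 1) / 2) - q := by
  have : NeZero q := ⟨by omega⟩
  obtain ⟨k, rfl⟩ : ∃ k, n = k + 2 := ⟨n - 2, by omega⟩
  have key := two_mul_card_add_le_of_isBalanced hqeven
    (fun _ => hS.tupRev_notMem_windowSet) hS.1.isBalanced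
  rw [hS.1.card_windowSet] at key
  zify at key
  linarith
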